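/- arXiv:2510.15811 — 6 statements merged into one kernel-verified Lean document; each statement's English description precedes it below -/
import Mathlib

section
/- Suppose β > h·(γ+δ) and K₀ + F > (γ+δ)/(β − h·(γ+δ)). Then the point (x*, y*) with x* = (γ+δ)/(β − h·(γ+δ)) and y* = β·r·(−γ−δ + (F+K₀)·(β − h·(γ+δ))) / (α·(F+K₀)·(β − h·(γ+δ))²) is an equilibrium of the crop–pest system, i.e., F₁(x*,y*) = 0 and F₂(x*,y*) = 0, and moreover x* > 0 and y* > 0. -/
noncomputable def F1 (r K0 F α h x y : ℝ) : ℝ :=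
  r * x * (1 - x / (K0 + F)) - α * x * y / (1 + h * x)

noncomputable def F2 (β δ γ h x y : ℝ) : ℝ :=
  β * x * y / (1 + h * x) - (δ + γ) * y

/-!
The pest equation `F₂ = 0` with `y ≠ 0` reads `β x = (γ + δ)(1 + h x)`, whose solution is `x*`;
the crop equation `F₁ = 0` then forces `y = r (1 + h x)(1 - x/K) / α` with `K = K₀ + F`, and
substituting `1 + h x* = β / (β - h (γ + δ))` turns this into the stated `y*`. Positivity is
`β > h (γ + δ)` for `x*` and `x* < K` for `y*`.
-/

theorem F1_eq_zero_on_crop_nullcline {r K0 F α h x : ℝ} (hα : α ≠ 0) (hx : 1 + h * x ≠ 0) :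
    F1 r K0 F α h x (r * (1 + h * x) * (1 - x / (K0 + F)) / α) = 0 := by
  unfold F1
  generalize 1 - x / (K0 + F) = s
  generalize 1 + h * x = q at hx ⊢
  field_simp
  ring

theorem F2_eq_zero_of_pest_nullcline {β δ γ h x : ℝ} (y : ℝ) (hx : 1 + h * x ≠ 0)
    (hxeq : β * x = (δ + γ) * (1 + h * x)) : F2 β δ γ h x y = 0 := by
  unfold F2
  rw [hxeq, mul_right_comm, mul_div_cancel_right₀ _ hx]
  ring

theorem one_add_mul_div_sub_mul {β c h : ℝ} (hD : β - h * c ≠ 0) :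
    1 + h * (c / (β - h * c)) = β / (β - h * c) := by
  field_simp
  ring

theorem coexistence_equilibrium_general
    (r K0 F α β δ γ h : ℝ)
    (hr : 0 < r) (hα : 0 < α)
    (hβ : 0 < β) (hδ : 0 < δ) (hγ : 0 < γ)
    (hcond : β > h * (γ + δ))
    (hcap : K0 + F > (γ + δ) / (β - h * (γ + δ))) :
    let xstar : ℝ := (γ + δ) / (β - h * (γ + δ))
    let ystar : ℝ := β * r * (-γ - δ + (F + K0) * (β - h * (γ + δ))) /
      (α * (F + K0) * (β - h * (γ + δ)) ^ 2)
    F1 r K0 F α h xstar ystar = 0 ∧ F2 β δ γ h xstar ystar = 0 ∧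
      0 < xstar ∧ 0 < ystar := by
  intro xstar ystar
  have hD : 0 < β - h * (γ + δ) := sub_pos.mpr hcond
  have hx : 0 < xstar := div_pos (by linarith) hD
  have hK : 0 < K0 + F := hx.trans hcap
  have hone : 1 + h * xstar = β / (β - h * (γ + δ)) := one_add_mul_div_sub_mul hD.ne'
  have hone_pos : 0 < 1 + h * xstar := hone ▸ div_pos hβ hD
  have hy : ystar = r * (1 + h * xstar) * (1 - xstar / (K0 + F)) / α := by
    rw [hone]
    simp only [xstar, ystar]
    rw [add_comm F K0]
    field_simp
    ring
  have hpest : β * xstar = (δ + γ) * (1 + h * xstar) := by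
    rw [hone]
    simp only [xstar]
    field_simp
    ring
  have hxK : 0 < 1 - xstar / (K0 + F) := by rwa [sub_pos, div_lt_one hK]
  exact ⟨hy ▸ F1_eq_zero_on_crop_nullcline hα.ne' hone_pos.ne',
    F2_eq_zero_of_pest_nullcline ystar hone_pos.ne' hpest, hx, hy ▸ by positivity⟩

theorem coexistence_equilibrium
    (r K0 F α β δ γ h : ℝ)
    (hr : 0 < r) (hK0 : 0 < K0) (hF : 0 < F) (hα : 0 < α)
    (hβ : 0 < β) (hδ : 0 < δ) (hγ : 0 < γ) (hh : 0 < h)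
    (hcond : β > h * (γ + δ))
    (hcap : K0 + F > (γ + δ) / (β - h * (γ + δ))) :
    let xstar : ℝ := (γ + δ) / (β - h * (γ + δ))
    let ystar : ℝ := β * r * (-γ - δ + (F + K0) * (β - h * (γ + δ))) /
      (α * (F + K0) * (β - h * (γ + δ)) ^ 2)
    F1 r K0 F α h xstar ystar = 0 ∧ F2 β δ γ h xstar ystar = 0 ∧
      0 < xstar ∧ 0 < ystar :=
  coexistence_equilibrium_general r K0 F α β δ γ h hr hα hβ hδ hγ hcond hcap
end

section
/- If β·(K₀+F)/(1 + h·(K₀+F)) > δ + γ, then the Jacobian of the crop–pest system at (K₀+F, 0) has a positive eigenvalue, so the pest-extinction equilibrium is unstable. -/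
theorem F2_eq_mul (β δ γ h x y : ℝ) :
    F2 β δ γ h x y = (β * x / (1 + h * x) - (δ + γ)) * y := by
  unfold F2
  ring

theorem hasDerivAt_F2_right (β δ γ h x y : ℝ) :
    HasDerivAt (F2 β δ γ h x) (β * x / (1 + h * x) - (δ + γ)) y := by
  have hlin : F2 β δ γ h x = fun y => (β * x / (1 + h * x) - (δ + γ)) * y :=
    funext (F2_eq_mul β δ γ h x)
  rw [hlin]
  simpa using (hasDerivAt_id y).const_mul (β * x / (1 + h * x) - (δ + γ))

theorem jacobian_pest_extinction_unstable_general
    (K0 F β δ γ h : ℝ)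
    (hcond : β * (K0 + F) / (1 + h * (K0 + F)) > δ + γ) :
    HasDerivAt (fun y => F2 β δ γ h (K0 + F) y)
      (β * (K0 + F) / (1 + h * (K0 + F)) - (γ + δ)) 0 ∧
    0 < β * (K0 + F) / (1 + h * (K0 + F)) - (γ + δ) := by
  rw [add_comm γ δ]
  exact ⟨hasDerivAt_F2_right β δ γ h (K0 + F) 0, sub_pos.mpr hcond⟩

theorem jacobian_pest_extinction_unstable
    (r K0 F α β δ γ h : ℝ)
    (hr : 0 < r) (hK0 : 0 < K0) (hF : 0 < F) (hα : 0 < α)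
    (hβ : 0 < β) (hδ : 0 < δ) (hγ : 0 < γ) (hh : 0 < h)
    (hcond : β * (K0 + F) / (1 + h * (K0 + F)) > δ + γ) :
    HasDerivAt (fun y => F2 β δ γ h (K0 + F) y)
      (β * (K0 + F) / (1 + h * (K0 + F)) - (γ + δ)) 0 ∧
    0 < β * (K0 + F) / (1 + h * (K0 + F)) - (γ + δ) :=
  jacobian_pest_extinction_unstable_general K0 F β δ γ h hcond
end

section
/- Fix all parameters except F, and assume β > h·(γ+δ). The coexistence pest equilibrium value y*(F) = β·r·(−(γ+δ) + (K₀+F)·(β − h·(γ+δ)))/(α·(K₀+F)·(β − h·(γ+δ))²) is a strictly increasing function of F on the region where it is positive, i.e., increasing fertilizer strictly increases the equilibrium pest density. -/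
noncomputable def ystar (r K0 α β δ γ h F : ℝ) : ℝ :=
  β * r * (-(γ + δ) + (K0 + F) * (β - h * (γ + δ))) /
    (α * (K0 + F) * (β - h * (γ + δ)) ^ 2)

/-! With `c = β - h(γ+δ) > 0`, the equilibrium is `y*(F) = βr/(αc) - βr(γ+δ)/(αc²) · 1/(K₀+F)`,
an affine function of `-1/(K₀+F)` with positive slope. On the region `(K₀+F)c > γ+δ > 0` the
denominator `K₀+F` is positive, so `y*` increases with `F`. -/

theorem ystar_eq_sub_div {r K0 α β δ γ h F : ℝ} (hα : α ≠ 0) (hK : K0 + F ≠ 0) :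
    ystar r K0 α β δ γ h F =
      β * r / (α * (β - h * (γ + δ))) -
        β * r * (γ + δ) / (α * (β - h * (γ + δ)) ^ 2) / (K0 + F) := by
  unfold ystar
  field_simp
  ring

theorem pest_equilibrium_increasing_in_F_general
    (r K0 α β δ γ h : ℝ)
    (hr : 0 < r) (hα : 0 < α)
    (hβ : 0 < β) (hδ : 0 < δ) (hγ : 0 < γ)
    (hcond : β > h * (γ + δ)) :
    ∀ F₁ F₂ : ℝ, 0 < F₁ → 0 < F₂ →
      (K0 + F₁) * (β - h * (γ + δ)) > γ + δ →
      (K0 + F₂) * (β - h * (γ + δ)) > γ + δ →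
      F₁ < F₂ →
      ystar r K0 α β δ γ h F₁ < ystar r K0 α β δ γ h F₂ := by
  intro F₁ F₂ _ _ hF₁ _ hlt
  have hc : 0 < β - h * (γ + δ) := sub_pos.mpr hcond
  have hs : 0 < γ + δ := add_pos hγ hδ
  have hK₁ : 0 < K0 + F₁ := pos_of_mul_pos_left (hs.trans hF₁) hc.le
  have hK₂ : 0 < K0 + F₂ := by linarith
  rw [ystar_eq_sub_div hα.ne' hK₁.ne', ystar_eq_sub_div hα.ne' hK₂.ne']
  exact sub_lt_sub_left (div_lt_div_of_pos_left (by positivity) hK₁ (by linarith)) _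

theorem pest_equilibrium_increasing_in_F
    (r K0 α β δ γ h : ℝ)
    (hr : 0 < r) (hK0 : 0 < K0) (hα : 0 < α)
    (hβ : 0 < β) (hδ : 0 < δ) (hγ : 0 < γ) (hh : 0 < h)
    (hcond : β > h * (γ + δ)) :
    ∀ F₁ F₂ : ℝ, 0 < F₁ → 0 < F₂ →
      (K0 + F₁) * (β - h * (γ + δ)) > γ + δ →
      (K0 + F₂) * (β - h * (γ + δ)) > γ + δ →
      F₁ < F₂ →
      ystar r K0 α β δ γ h F₁ < ystar r K0 α β δ γ h F₂ :=
  pest_equilibrium_increasing_in_F_general r K0 α β δ γ h hr hα hβ hδ hγ hcond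
end

section
/- Fix all parameters except γ, and assume the coexistence equilibrium exists (β > h·(γ+δ) and (K₀+F)·(β − h·(γ+δ)) > γ+δ). Then the crop equilibrium value x*(γ) = (γ+δ)/(β − h·(γ+δ)) is a strictly increasing function of γ, i.e., increasing insecticide-induced pest mortality strictly increases the equilibrium crop density. -/
noncomputable def xstar (β δ h γ : ℝ) : ℝ := (γ + δ) / (β - h * (γ + δ))

-- Cross-multiplying, the terms `h * u * v` cancel and only `β * u < β * v` remains.
theorem strictMonoOn_div_sub_mul {β h : ℝ} (hβ : 0 < β) :
    StrictMonoOn (fun u : ℝ => u / (β - h * u)) {u | h * u < β} := by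
  intro u hu v hv huv
  have hu' : 0 < β - h * u := sub_pos.mpr hu
  have hv' : 0 < β - h * v := sub_pos.mpr hv
  show u / (β - h * u) < v / (β - h * v)
  rw [div_lt_div_iff₀ hu' hv']
  nlinarith [mul_lt_mul_of_pos_left huv hβ]

theorem crop_equilibrium_increasing_in_gamma_general
    (K0 F β δ h : ℝ)
    (hβ : 0 < β) :
    ∀ γ₁ γ₂ : ℝ, 0 < γ₁ → 0 < γ₂ →
      β > h * (γ₁ + δ) → β > h * (γ₂ + δ) →
      (K0 + F) * (β - h * (γ₁ + δ)) > γ₁ + δ →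
      (K0 + F) * (β - h * (γ₂ + δ)) > γ₂ + δ →
      γ₁ < γ₂ →
      xstar β δ h γ₁ < xstar β δ h γ₂ := by
  intro γ₁ γ₂ _ _ hb₁ hb₂ _ _ hlt
  exact strictMonoOn_div_sub_mul hβ hb₁ hb₂ (by linarith)

theorem crop_equilibrium_increasing_in_gamma
    (r K0 F α β δ h : ℝ)
    (hr : 0 < r) (hK0 : 0 < K0) (hF : 0 < F) (hα : 0 < α)
    (hβ : 0 < β) (hδ : 0 < δ) (hh : 0 < h) :
    ∀ γ₁ γ₂ : ℝ, 0 < γ₁ → 0 < γ₂ →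
      β > h * (γ₁ + δ) → β > h * (γ₂ + δ) →
      (K0 + F) * (β - h * (γ₁ + δ)) > γ₁ + δ →
      (K0 + F) * (β - h * (γ₂ + δ)) > γ₂ + δ →
      γ₁ < γ₂ →
      xstar β δ h γ₁ < xstar β δ h γ₂ :=
  crop_equilibrium_increasing_in_gamma_general K0 F β δ h hβ
end

section
/- Define T(γ) = r − 2·r·x*(γ)/(K₀+F) − α·y*(γ)/(1+h·x*(γ))², the trace of the Jacobian at the coexistence equilibrium as a function of the insecticide mortality γ. As γ increases toward the value γ_c where x*(γ) = K₀+F (i.e., y*(γ) → 0), T(γ) tends to −r; in particular, there exists γ₀ such that T(γ) < 0 for all γ in (γ₀, γ_c), so sufficiently strong insecticide mortality stabilizes the coexistence equilibrium whenever it exists. -/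
noncomputable def xstarγ (β δ h γ : ℝ) : ℝ := (γ + δ) / (β - h * (γ + δ))

noncomputable def ystarγ (r K0 F α β δ h γ : ℝ) : ℝ :=
  β * r * (-(γ + δ) + (K0 + F) * (β - h * (γ + δ))) /
    (α * (K0 + F) * (β - h * (γ + δ)) ^ 2)

noncomputable def traceT (r K0 F α β δ h γ : ℝ) : ℝ :=
  r - 2 * r * xstarγ β δ h γ / (K0 + F) -
    α * ystarγ r K0 F α β δ h γ / (1 + h * xstarγ β δ h γ) ^ 2

/-!
At `γ_c` the numerator of `y*` vanishes while the denominator `β - h (γ + δ)` stays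
nonzero, so `x*(γ_c) = K₀ + F` and `y*(γ_c) = 0`, which gives `T(γ_c) = r - 2r - 0 = -r`.
Every ingredient of `T` is a rational function of `γ` that is regular at `γ_c`, so `T` is
continuous there; the limit from the left is `-r < 0`, and `T < 0` on a left neighbourhood.
-/

open Filter Topology Set

section Critical

variable {r K0 F α β δ h γ : ℝ}

lemma sub_mul_ne_zero_of_eq_mul (hβ : β ≠ 0)
    (hγ : γ + δ = (K0 + F) * (β - h * (γ + δ))) : β - h * (γ + δ) ≠ 0 := by
  intro hden
  rw [hden, mul_zero] at hγ
  simp [hγ, hβ] at hden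

lemma xstarγ_eq_of_eq_mul (hβ : β ≠ 0) (hγ : γ + δ = (K0 + F) * (β - h * (γ + δ))) :
    xstarγ β δ h γ = K0 + F :=
  (div_eq_iff (sub_mul_ne_zero_of_eq_mul hβ hγ)).2 hγ

lemma ystarγ_eq_zero_of_eq_mul (hγ : γ + δ = (K0 + F) * (β - h * (γ + δ))) :
    ystarγ r K0 F α β δ h γ = 0 := by
  rw [ystarγ, ← hγ, neg_add_cancel, mul_zero, zero_div]

lemma traceT_eq_neg_of_eq_mul (hβ : β ≠ 0) (hs : K0 + F ≠ 0)
    (hγ : γ + δ = (K0 + F) * (β - h * (γ + δ))) : traceT r K0 F α β δ h γ = -r := by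
  rw [traceT, xstarγ_eq_of_eq_mul hβ hγ, ystarγ_eq_zero_of_eq_mul hγ]
  field_simp
  ring

end Critical

lemma continuousAt_traceT {r K0 F α β δ h γ : ℝ} (hα : α ≠ 0) (hs : K0 + F ≠ 0)
    (hden : β - h * (γ + δ) ≠ 0) (hx : 1 + h * xstarγ β δ h γ ≠ 0) :
    ContinuousAt (traceT r K0 F α β δ h) γ := by
  have hxstar : ContinuousAt (xstarγ β δ h) γ := by
    unfold xstarγ
    exact ContinuousAt.div (by fun_prop) (by fun_prop) hden
  have hystar : ContinuousAt (ystarγ r K0 F α β δ h) γ := by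
    unfold ystarγ
    exact ContinuousAt.div (by fun_prop) (by fun_prop) (by simp [hα, hs, hden])
  unfold traceT
  exact ((continuousAt_const.sub ((continuousAt_const.mul hxstar).div_const _)).sub
    ((continuousAt_const.mul hystar).div ((continuousAt_const.add
      (continuousAt_const.mul hxstar)).pow 2) (pow_ne_zero 2 hx)))

lemma exists_forall_Ioo_lt_of_tendsto_nhdsLT {f : ℝ → ℝ} {a l c : ℝ}
    (hf : Tendsto f (𝓝[<] a) (𝓝 l)) (hl : l < c) :
    ∃ a₀ < a, ∀ x ∈ Ioo a₀ a, f x < c := by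
  obtain ⟨a₀, ha₀, hsub⟩ :=
    mem_nhdsLT_iff_exists_Ioo_subset.1 (hf.eventually_lt_const hl)
  exact ⟨a₀, ha₀, fun x hx => hsub hx⟩

theorem strong_insecticide_stabilizes_general
    (r K0 F α β δ h : ℝ)
    (hr : 0 < r) (hK0 : 0 < K0) (hF : 0 < F) (hα : 0 < α)
    (hβ : 0 < β) (hh : 0 < h) :
    let γc : ℝ := β * (K0 + F) / (1 + h * (K0 + F)) - δ
    Filter.Tendsto (traceT r K0 F α β δ h)
      (nhdsWithin γc (Set.Iio γc)) (nhds (-r)) ∧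
    ∃ γ₀ : ℝ, γ₀ < γc ∧ ∀ γ ∈ Set.Ioo γ₀ γc, traceT r K0 F α β δ h γ < 0 := by
  intro γc
  have hs : 0 < K0 + F := by positivity
  have hcrit : γc + δ = (K0 + F) * (β - h * (γc + δ)) := by
    simp only [γc]
    field_simp
    ring
  have hcont : ContinuousAt (traceT r K0 F α β δ h) γc := by
    refine continuousAt_traceT hα.ne' hs.ne' (sub_mul_ne_zero_of_eq_mul hβ.ne' hcrit) ?_
    rw [xstarγ_eq_of_eq_mul hβ.ne' hcrit]
    positivity
  have htend : Tendsto (traceT r K0 F α β δ h) (𝓝[<] γc) (𝓝 (-r)) := by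
    rw [← traceT_eq_neg_of_eq_mul hβ.ne' hs.ne' hcrit]
    exact hcont.continuousWithinAt.tendsto
  exact ⟨htend, exists_forall_Ioo_lt_of_tendsto_nhdsLT htend (neg_neg_of_pos hr)⟩

theorem strong_insecticide_stabilizes
    (r K0 F α β δ h : ℝ)
    (hr : 0 < r) (hK0 : 0 < K0) (hF : 0 < F) (hα : 0 < α)
    (hβ : 0 < β) (hδ : 0 < δ) (hh : 0 < h)
    (hcap : β * (K0 + F) > (1 + h * (K0 + F)) * δ) :
    let γc : ℝ := β * (K0 + F) / (1 + h * (K0 + F)) - δ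
    Filter.Tendsto (traceT r K0 F α β δ h)
      (nhdsWithin γc (Set.Iio γc)) (nhds (-r)) ∧
    ∃ γ₀ : ℝ, γ₀ < γc ∧ ∀ γ ∈ Set.Ioo γ₀ γc, traceT r K0 F α β δ h γ < 0 :=
  strong_insecticide_stabilizes_general r K0 F α β δ h hr hK0 hF hα hβ hh
end

section
/- In the pulsed insecticide model, if immediately after a spray event the pest population is (1−θ)·y with 0 < θ < 1, and between sprays the pest evolves according to y' = (β·x/(1+h·x) − δ)·y with x(t) ≤ X_max, then over a time interval of length τ between sprays the pest population multiplies by at most (1−θ)·exp((β·X_max/(1+h·X_max) − δ)·τ); hence if θ > 1 − exp(−(β·X_max/(1+h·X_max) − δ)·τ), the pest population decreases geometrically across spray cycles. -/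
/-!
Between sprays the per-capita growth rate `β x / (1 + h x) - δ` never exceeds
`K = β Xmax / (1 + h Xmax) - δ`, because the Holling type II response is increasing. Once the
population is known to stay positive, `y' ≤ K y` and Grönwall's inequality give
`y τ ≤ y 0 · exp (K τ) = (1 - θ) exp (K τ) y₀`, and the spray condition says exactly that the
factor `(1 - θ) exp (K τ)` is below `1`. Positivity of `y` comes from the lower bound `-δ` on the
rate: Grönwall applied to `y²` keeps it away from `0`, so `y` cannot change sign.
-/

open Real Set

theorem monotoneOn_mul_div_one_add_mul {β h : ℝ} (hβ : 0 ≤ β) (hh : 0 ≤ h) :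
    MonotoneOn (fun s => β * s / (1 + h * s)) (Ici 0) := by
  intro s (hs : 0 ≤ s) X (hX : 0 ≤ X) hsX
  rw [div_le_div_iff₀ (by positivity) (by positivity)]
  nlinarith [mul_le_mul_of_nonneg_left hsX hβ]

section Gronwall

variable {f f' : ℝ → ℝ} {K a b : ℝ}

theorem le_mul_exp_of_deriv_le_mul (hf : ContinuousOn f (Icc a b))
    (hf' : ∀ x ∈ Ico a b, HasDerivWithinAt f (f' x) (Ici x) x)
    (bound : ∀ x ∈ Ico a b, f' x ≤ K * f x) :
    ∀ x ∈ Icc a b, f x ≤ f a * exp (K * (x - a)) := by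
  intro x hx
  rw [← gronwallBound_ε0]
  exact le_gronwallBound_of_liminf_deriv_right_le hf
    (fun x hx _ hr => (hf' x hx).liminf_right_slope_le hr) le_rfl (by simpa using bound) x hx

theorem mul_exp_le_of_mul_le_deriv (hf : ContinuousOn f (Icc a b))
    (hf' : ∀ x ∈ Ico a b, HasDerivWithinAt f (f' x) (Ici x) x)
    (bound : ∀ x ∈ Ico a b, K * f x ≤ f' x) :
    ∀ x ∈ Icc a b, f a * exp (K * (x - a)) ≤ f x := by
  intro x hx
  have := le_mul_exp_of_deriv_le_mul (f := -f) (f' := -f') hf.neg (fun x hx => (hf' x hx).neg)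
    (fun x hx => by simpa using bound x hx) x hx
  simpa using this

end Gronwall

section LinearODE

variable {r y : ℝ → ℝ} {a b : ℝ}

theorem pos_of_linear_ode {c : ℝ} (hy : ∀ t ∈ Icc a b, HasDerivAt y (r t * y t) t)
    (hr : ∀ t ∈ Icc a b, c ≤ r t) (ha : 0 < y a) :
    ∀ t ∈ Icc a b, 0 < y t := by
  have hsq_deriv : ∀ t ∈ Icc a b, HasDerivAt (fun t => y t ^ 2) (2 * r t * y t ^ 2) t :=
    fun t ht => ((hy t ht).pow 2).congr_deriv (by ring)
  have hsq : ∀ t ∈ Icc a b, y a ^ 2 * exp (2 * c * (t - a)) ≤ y t ^ 2 :=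
    mul_exp_le_of_mul_le_deriv (HasDerivAt.continuousOn hsq_deriv)
      (fun t ht => (hsq_deriv t (Ico_subset_Icc_self ht)).hasDerivWithinAt)
      (fun t ht => by nlinarith [hr t (Ico_subset_Icc_self ht), sq_nonneg (y t)])
  have hne : ∀ t ∈ Icc a b, y t ≠ 0 := fun t ht hzero => by
    have := hsq t ht
    rw [hzero] at this
    nlinarith [mul_pos (pow_pos ha 2) (exp_pos (2 * c * (t - a)))]
  intro t ht
  by_contra! hneg
  have hsub : Icc a t ⊆ Icc a b := Icc_subset_Icc_right ht.2
  obtain ⟨s, hs, hys⟩ := intermediate_value_Icc' ht.1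
    ((HasDerivAt.continuousOn hy).mono hsub) ⟨hneg, ha.le⟩
  exact hne s (hsub hs) hys

theorem le_mul_exp_of_linear_ode {K : ℝ} (hy : ∀ t ∈ Icc a b, HasDerivAt y (r t * y t) t)
    (hr : ∀ t ∈ Icc a b, r t ≤ K)
    (hpos : ∀ t ∈ Icc a b, 0 ≤ y t) : ∀ t ∈ Icc a b, y t ≤ y a * exp (K * (t - a)) :=
  le_mul_exp_of_deriv_le_mul (HasDerivAt.continuousOn hy)
    (fun t ht => (hy t (Ico_subset_Icc_self ht)).hasDerivWithinAt)
    (fun t ht => mul_le_mul_of_nonneg_right (hr t (Ico_subset_Icc_self ht))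
      (hpos t (Ico_subset_Icc_self ht)))

end LinearODE

theorem pulsed_spray_geometric_decrease_general
    (β δ h θ τ Xmax y₀ : ℝ)
    (hβ : 0 < β) (hh : 0 < h) (hτ : 0 < τ)
    (hθ1 : θ < 1)
    (hy₀ : 0 < y₀)
    (x y : ℝ → ℝ)
    (hxbnd : ∀ t ∈ Set.Icc (0 : ℝ) τ, 0 < x t ∧ x t ≤ Xmax)
    (hy' : ∀ t ∈ Set.Icc (0 : ℝ) τ,
      HasDerivAt y ((β * x t / (1 + h * x t) - δ) * y t) t)
    (hy0 : y 0 = (1 - θ) * y₀) :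
    y τ ≤ (1 - θ) * Real.exp ((β * Xmax / (1 + h * Xmax) - δ) * τ) * y₀ ∧
    (θ > 1 - Real.exp (-((β * Xmax / (1 + h * Xmax) - δ) * τ)) → y τ < y₀) := by
  set K := β * Xmax / (1 + h * Xmax) - δ
  have hrate_le : ∀ t ∈ Icc 0 τ, β * x t / (1 + h * x t) - δ ≤ K := fun t ht =>
    have ⟨hx0, hxX⟩ := hxbnd t ht
    sub_le_sub_right (monotoneOn_mul_div_one_add_mul hβ.le hh.le (mem_Ici.2 hx0.le)
      (mem_Ici.2 (hx0.le.trans hxX)) hxX) δ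
  have hrate_ge : ∀ t ∈ Icc 0 τ, -δ ≤ β * x t / (1 + h * x t) - δ := fun t ht => by
    have := (hxbnd t ht).1
    have : 0 ≤ β * x t / (1 + h * x t) := by positivity
    linarith
  have hpos := pos_of_linear_ode hy' hrate_ge (by rw [hy0]; exact mul_pos (sub_pos.2 hθ1) hy₀)
  have hbound : y τ ≤ (1 - θ) * exp (K * τ) * y₀ := by
    have := le_mul_exp_of_linear_ode hy' hrate_le (fun t ht => (hpos t ht).le) τ ⟨hτ.le, le_rfl⟩
    rwa [hy0, sub_zero, mul_right_comm] at this
  refine ⟨hbound, fun hθ => hbound.trans_lt ?_⟩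
  have hfactor : (1 - θ) * exp (K * τ) < 1 := by
    rw [← lt_div_iff₀ (exp_pos _), one_div, ← exp_neg]
    linarith
  simpa using mul_lt_mul_of_pos_right hfactor hy₀

theorem pulsed_spray_geometric_decrease
    (β δ h θ τ Xmax y₀ : ℝ)
    (hβ : 0 < β) (hδ : 0 < δ) (hh : 0 < h) (hτ : 0 < τ) (hX : 0 < Xmax)
    (hθ0 : 0 < θ) (hθ1 : θ < 1)
    (hgrow : β * Xmax / (1 + h * Xmax) > δ)
    (hy₀ : 0 < y₀)
    (x y : ℝ → ℝ)
    (hxbnd : ∀ t ∈ Set.Icc (0 : ℝ) τ, 0 < x t ∧ x t ≤ Xmax)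
    (hy' : ∀ t ∈ Set.Icc (0 : ℝ) τ,
      HasDerivAt y ((β * x t / (1 + h * x t) - δ) * y t) t)
    (hy0 : y 0 = (1 - θ) * y₀) :
    y τ ≤ (1 - θ) * Real.exp ((β * Xmax / (1 + h * Xmax) - δ) * τ) * y₀ ∧
    (θ > 1 - Real.exp (-((β * Xmax / (1 + h * Xmax) - δ) * τ)) → y τ < y₀) :=
  pulsed_spray_geometric_decrease_general β δ h θ τ Xmax y₀ hβ hh hτ hθ1 hy₀ x y hxbnd hy' hy0
end
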